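/- arXiv:2508.02709 — 5 statements merged into one kernel-verified Lean document; each statement's English description precedes it below -/
import Mathlib

section
/- For every x ∈ 𝕋_{αβ}, the product x · x^i · x^j · x^k equals Re{x·x^i}² − α·Im{x·x^i}², where Re and Im denote the real component and the i-component respectively; in particular this product is a real number. -/
/-- The `(αβ)`-tessarine algebra over a commutative ring `R`:
elements `a + b·i + c·j + d·k` with `i² = α`, `j² = β`, `k² = αβ`,
`ij = k`, `ik = αj`, `jk = βi`. -/
@[ext]
structure Tess (R : Type*) (α β : R) where
  re : R
  imI : R
  imJ : R
  imK : R

namespace Tess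

variable {R : Type*} [CommRing R] {α β : R}

instance : Zero (Tess R α β) := ⟨⟨0, 0, 0, 0⟩⟩
instance : One (Tess R α β) := ⟨⟨1, 0, 0, 0⟩⟩
instance : Add (Tess R α β) :=
  ⟨fun x y => ⟨x.re + y.re, x.imI + y.imI, x.imJ + y.imJ, x.imK + y.imK⟩⟩
instance : Neg (Tess R α β) := ⟨fun x => ⟨-x.re, -x.imI, -x.imJ, -x.imK⟩⟩
instance : Mul (Tess R α β) :=
  ⟨fun x y =>
    ⟨x.re * y.re + α * (x.imI * y.imI) + β * (x.imJ * y.imJ) + α * β * (x.imK * y.imK),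
     x.re * y.imI + x.imI * y.re + β * (x.imJ * y.imK) + β * (x.imK * y.imJ),
     x.re * y.imJ + x.imJ * y.re + α * (x.imI * y.imK) + α * (x.imK * y.imI),
     x.re * y.imK + x.imK * y.re + x.imI * y.imJ + x.imJ * y.imI⟩⟩

@[simp] lemma zero_re : (0 : Tess R α β).re = 0 := rfl
@[simp] lemma zero_imI : (0 : Tess R α β).imI = 0 := rfl
@[simp] lemma zero_imJ : (0 : Tess R α β).imJ = 0 := rfl
@[simp] lemma zero_imK : (0 : Tess R α β).imK = 0 := rfl
@[simp] lemma one_re : (1 : Tess R α β).re = 1 := rfl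
@[simp] lemma one_imI : (1 : Tess R α β).imI = 0 := rfl
@[simp] lemma one_imJ : (1 : Tess R α β).imJ = 0 := rfl
@[simp] lemma one_imK : (1 : Tess R α β).imK = 0 := rfl
@[simp] lemma add_re (x y : Tess R α β) : (x + y).re = x.re + y.re := rfl
@[simp] lemma add_imI (x y : Tess R α β) : (x + y).imI = x.imI + y.imI := rfl
@[simp] lemma add_imJ (x y : Tess R α β) : (x + y).imJ = x.imJ + y.imJ := rfl
@[simp] lemma add_imK (x y : Tess R α β) : (x + y).imK = x.imK + y.imK := rfl
@[simp] lemma neg_re (x : Tess R α β) : (-x).re = -x.re := rfl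
@[simp] lemma neg_imI (x : Tess R α β) : (-x).imI = -x.imI := rfl
@[simp] lemma neg_imJ (x : Tess R α β) : (-x).imJ = -x.imJ := rfl
@[simp] lemma neg_imK (x : Tess R α β) : (-x).imK = -x.imK := rfl
@[simp] lemma mul_re (x y : Tess R α β) :
    (x * y).re = x.re * y.re + α * (x.imI * y.imI) + β * (x.imJ * y.imJ)
      + α * β * (x.imK * y.imK) := rfl
@[simp] lemma mul_imI (x y : Tess R α β) :
    (x * y).imI = x.re * y.imI + x.imI * y.re + β * (x.imJ * y.imK)
      + β * (x.imK * y.imJ) := rfl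
@[simp] lemma mul_imJ (x y : Tess R α β) :
    (x * y).imJ = x.re * y.imJ + x.imJ * y.re + α * (x.imI * y.imK)
      + α * (x.imK * y.imI) := rfl
@[simp] lemma mul_imK (x y : Tess R α β) :
    (x * y).imK = x.re * y.imK + x.imK * y.re + x.imI * y.imJ + x.imJ * y.imI := rfl

instance : CommRing (Tess R α β) where
  add_assoc x y z := by ext <;> simp <;> ring
  zero_add x := by ext <;> simp
  add_zero x := by ext <;> simp
  add_comm x y := by ext <;> simp <;> ring
  neg_add_cancel x := by ext <;> simp
  mul_assoc x y z := by ext <;> simp <;> ring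
  one_mul x := by ext <;> simp
  mul_one x := by ext <;> simp
  left_distrib x y z := by ext <;> simp <;> ring
  right_distrib x y z := by ext <;> simp <;> ring
  zero_mul x := by ext <;> simp
  mul_zero x := by ext <;> simp
  mul_comm x y := by ext <;> simp <;> ring
  nsmul := nsmulRec
  zsmul := zsmulRec

/-- The imaginary unit `i`. -/
def unitI : Tess R α β := ⟨0, 1, 0, 0⟩
/-- The imaginary unit `j`. -/
def unitJ : Tess R α β := ⟨0, 0, 1, 0⟩
/-- The imaginary unit `k`. -/
def unitK : Tess R α β := ⟨0, 0, 0, 1⟩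
/-- Embedding of the base ring. -/
def ofBase (r : R) : Tess R α β := ⟨r, 0, 0, 0⟩

/-- Conjugation `x^i`: negates the `j` and `k` components. -/
def conjI (x : Tess R α β) : Tess R α β := ⟨x.re, x.imI, -x.imJ, -x.imK⟩
/-- Conjugation `x^j`: negates the `i` and `k` components. -/
def conjJ (x : Tess R α β) : Tess R α β := ⟨x.re, -x.imI, x.imJ, -x.imK⟩
/-- Conjugation `x^k`: negates the `i` and `j` components. -/
def conjK (x : Tess R α β) : Tess R α β := ⟨x.re, -x.imI, -x.imJ, x.imK⟩

end Tess

/-- The special unit `w₁ = (√β + j)/(2√β)`. -/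
noncomputable def Tess.w1 (α β : ℝ) : Tess ℝ α β := ⟨1 / 2, 0, 1 / (2 * Real.sqrt β), 0⟩
/-- The special unit `w₂ = (√β − j)/(2√β)`. -/
noncomputable def Tess.w2 (α β : ℝ) : Tess ℝ α β := ⟨1 / 2, 0, -(1 / (2 * Real.sqrt β)), 0⟩


/-! Since `x ↦ x^j` is multiplicative and `(x^i)^j = x^k`, the product is `y y^j` with
`y = x x^i`. The `j`- and `k`-components of `y` cancel, so `y` lies in the subalgebra spanned
by `1` and `i`, where `y y^j = (a + bi)(a − bi) = a² − α b²`. -/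

namespace Tess

variable {R : Type*} [CommRing R] {α β : R}

lemma conjJ_mul (x y : Tess R α β) : conjJ (x * y) = conjJ x * conjJ y := by
  ext <;> simp only [conjJ, mul_re, mul_imI, mul_imJ, mul_imK] <;> ring

lemma conjJ_conjI (x : Tess R α β) : conjJ (conjI x) = conjK x := by
  ext <;> simp [conjI, conjJ, conjK]

lemma mul_conjI_imJ (x : Tess R α β) : (x * conjI x).imJ = 0 := by
  simp only [conjI, mul_imJ]; ring

lemma mul_conjI_imK (x : Tess R α β) : (x * conjI x).imK = 0 := by
  simp only [conjI, mul_imK]; ring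

lemma mul_conjJ_of_imJ_eq_zero_of_imK_eq_zero {y : Tess R α β} (hJ : y.imJ = 0)
    (hK : y.imK = 0) : y * conjJ y = ⟨y.re ^ 2 - α * y.imI ^ 2, 0, 0, 0⟩ := by
  ext <;> simp only [conjJ, mul_re, mul_imI, mul_imJ, mul_imK, hJ, hK] <;> ring

end Tess

theorem tess_prod_conj_general (α β : ℝ) (x : Tess ℝ α β) :
    x * Tess.conjI x * Tess.conjJ x * Tess.conjK x
      = (⟨(x * Tess.conjI x).re ^ 2 - α * (x * Tess.conjI x).imI ^ 2, 0, 0, 0⟩ :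
          Tess ℝ α β) := by
  have hconj : Tess.conjJ x * Tess.conjK x = Tess.conjJ (x * Tess.conjI x) := by
    rw [Tess.conjJ_mul, Tess.conjJ_conjI]
  rw [mul_assoc, hconj]
  exact Tess.mul_conjJ_of_imJ_eq_zero_of_imK_eq_zero (Tess.mul_conjI_imJ x)
    (Tess.mul_conjI_imK x)

/-- `x · x^i · x^j · x^k = Re{x x^i}² − α · Im{x x^i}²`, a real number. -/
theorem tess_prod_conj (α β : ℝ) (hα : α ≠ 0) (hβ : 0 < β) (x : Tess ℝ α β) :
    x * Tess.conjI x * Tess.conjJ x * Tess.conjK x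
      = (⟨(x * Tess.conjI x).re ^ 2 - α * (x * Tess.conjI x).imI ^ 2, 0, 0, 0⟩ :
          Tess ℝ α β) :=
  tess_prod_conj_general α β x
end

section
/- Let α < 0 and β > 0, and let x₁ = a₁ + c₁j, x₂ = a₂ + c₂j be elements of 𝕋_{αβ} whose associated tessarines are x̃₁ = ã₁ + c̃₁j and x̃₂ = ã₂ + c̃₂j. Then the associated tessarine of the product x₁x₂ is ã₁ã₂ + c̃₁c̃₂ j. -/
/-!
On elements `a + c j` the tessarine product is that of `R[j]/(j² - β)`. For any `s` with
`s² = β`, the substitution `j ↦ s` is a ring homomorphism `R[j]/(j² - β) → R`, so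
`a + c j ↦ a + s c` is multiplicative; taking `s = ±√β` gives both coordinates `ã` and `c̃`.
-/

namespace Tess

variable {R : Type*} [CommRing R] {α β : R} {x y : Tess R α β}

lemma mul_imI_eq_zero (hxI : x.imI = 0) (hxK : x.imK = 0) (hyI : y.imI = 0) (hyK : y.imK = 0) :
    (x * y).imI = 0 := by
  simp [hxI, hxK, hyI, hyK]

lemma mul_imK_eq_zero (hxI : x.imI = 0) (hxK : x.imK = 0) (hyI : y.imI = 0) (hyK : y.imK = 0) :
    (x * y).imK = 0 := by
  simp [hxI, hxK, hyI, hyK]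

lemma mul_re_add_mul_mul_imJ {s : R} (hs : s * s = β) (hxI : x.imI = 0) (hxK : x.imK = 0) :
    (x * y).re + s * (x * y).imJ = (x.re + s * x.imJ) * (y.re + s * y.imJ) := by
  simp only [mul_re, mul_imJ, hxI, hxK]
  linear_combination (-(x.imJ * y.imJ)) * hs

lemma mul_re_sub_mul_mul_imJ {s : R} (hs : s * s = β) (hxI : x.imI = 0) (hxK : x.imK = 0) :
    (x * y).re - s * (x * y).imJ = (x.re - s * x.imJ) * (y.re - s * y.imJ) := by
  simpa only [neg_mul, ← sub_eq_add_neg] using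
    mul_re_add_mul_mul_imJ (y := y) (s := -s) (by rw [neg_mul_neg, hs]) hxI hxK

end Tess

theorem tess_assoc_mul_general (α β : ℝ) (hβ : 0 < β) (a₁ c₁ a₂ c₂ : ℝ) :
    ((⟨a₁, 0, c₁, 0⟩ : Tess ℝ α β) * ⟨a₂, 0, c₂, 0⟩).imI = 0 ∧
    ((⟨a₁, 0, c₁, 0⟩ : Tess ℝ α β) * ⟨a₂, 0, c₂, 0⟩).imK = 0 ∧
    ((⟨a₁, 0, c₁, 0⟩ : Tess ℝ α β) * ⟨a₂, 0, c₂, 0⟩).re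
        + Real.sqrt β * ((⟨a₁, 0, c₁, 0⟩ : Tess ℝ α β) * ⟨a₂, 0, c₂, 0⟩).imJ
      = (a₁ + Real.sqrt β * c₁) * (a₂ + Real.sqrt β * c₂) ∧
    ((⟨a₁, 0, c₁, 0⟩ : Tess ℝ α β) * ⟨a₂, 0, c₂, 0⟩).re
        - Real.sqrt β * ((⟨a₁, 0, c₁, 0⟩ : Tess ℝ α β) * ⟨a₂, 0, c₂, 0⟩).imJ
      = (a₁ - Real.sqrt β * c₁) * (a₂ - Real.sqrt β * c₂) := by
  have hs : Real.sqrt β * Real.sqrt β = β := Real.mul_self_sqrt hβ.le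
  exact ⟨Tess.mul_imI_eq_zero rfl rfl rfl rfl, Tess.mul_imK_eq_zero rfl rfl rfl rfl,
    Tess.mul_re_add_mul_mul_imJ hs rfl rfl, Tess.mul_re_sub_mul_mul_imJ hs rfl rfl⟩

/-- for `α < 0` and `x₁ = a₁ + c₁ j`, `x₂ = a₂ + c₂ j` with associated
tessarines `ã_n = a_n + √β c_n`, `c̃_n = a_n − √β c_n`, the associated tessarine of
`x₁ x₂` is `ã₁ã₂ + c̃₁c̃₂ j`; i.e. `x₁x₂` has the form `p + q j` with
`p + √β q = ã₁ ã₂` and `p − √β q = c̃₁ c̃₂`. -/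
theorem tess_assoc_mul (α β : ℝ) (hα : α < 0) (hβ : 0 < β) (a₁ c₁ a₂ c₂ : ℝ) :
    ((⟨a₁, 0, c₁, 0⟩ : Tess ℝ α β) * ⟨a₂, 0, c₂, 0⟩).imI = 0 ∧
    ((⟨a₁, 0, c₁, 0⟩ : Tess ℝ α β) * ⟨a₂, 0, c₂, 0⟩).imK = 0 ∧
    ((⟨a₁, 0, c₁, 0⟩ : Tess ℝ α β) * ⟨a₂, 0, c₂, 0⟩).re
        + Real.sqrt β * ((⟨a₁, 0, c₁, 0⟩ : Tess ℝ α β) * ⟨a₂, 0, c₂, 0⟩).imJ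
      = (a₁ + Real.sqrt β * c₁) * (a₂ + Real.sqrt β * c₂) ∧
    ((⟨a₁, 0, c₁, 0⟩ : Tess ℝ α β) * ⟨a₂, 0, c₂, 0⟩).re
        - Real.sqrt β * ((⟨a₁, 0, c₁, 0⟩ : Tess ℝ α β) * ⟨a₂, 0, c₂, 0⟩).imJ
      = (a₁ - Real.sqrt β * c₁) * (a₂ - Real.sqrt β * c₂) :=
  tess_assoc_mul_general α β hβ a₁ c₁ a₂ c₂
end

section
/- Let X ∈ 𝕋_{αβ}^{p×p} be written as X = X_s w₁ + X_d w₂, with X_s = X_a + √β X_b, X_d = X_a − √β X_b (where X = X_a + X_b j with ℂ_α-matrices X_a, X_b), and w₁ = (√β + j)/(2√β), w₂ = (√β − j)/(2√β). Then X is invertible in 𝕋_{αβ}^{p×p} if and only if both X_s and X_d are invertible as matrices over the subalgebra ℂ_α, and in that case X⁻¹ = C + D j with C = (X_s⁻¹ + X_d⁻¹)/2 and D = (X_s⁻¹ − C)/√β. -/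
/-- The matrix `X_s = X_a + √β X_b` of the idempotent decomposition, entrywise. -/
noncomputable def Tess.matS {α β : ℝ} {p q : ℕ} (X : Matrix (Fin p) (Fin q) (Tess ℝ α β)) :
    Matrix (Fin p) (Fin q) (Tess ℝ α β) :=
  Matrix.of fun i j =>
    ⟨(X i j).re + Real.sqrt β * (X i j).imJ, (X i j).imI + Real.sqrt β * (X i j).imK, 0, 0⟩

/-- The matrix `X_d = X_a − √β X_b` of the idempotent decomposition, entrywise. -/
noncomputable def Tess.matD {α β : ℝ} {p q : ℕ} (X : Matrix (Fin p) (Fin q) (Tess ℝ α β)) :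
    Matrix (Fin p) (Fin q) (Tess ℝ α β) :=
  Matrix.of fun i j =>
    ⟨(X i j).re - Real.sqrt β * (X i j).imJ, (X i j).imI - Real.sqrt β * (X i j).imK, 0, 0⟩

/-- A matrix has entries in the subalgebra `ℂ_α` (spanned by `1, i`). -/
def Tess.matInCα {α β : ℝ} {p q : ℕ} (Y : Matrix (Fin p) (Fin q) (Tess ℝ α β)) : Prop :=
  ∀ i j, (Y i j).imJ = 0 ∧ (Y i j).imK = 0

namespace Tess

section CommRing

variable {R : Type*} [CommRing R] {α β : R}

/-- `x_a + x_b j ↦ x_a + s x_b`, i.e. `j ↦ s`; for `s = ±√β` it gives `X_s` and `X_d`. -/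
def evalJ (s : R) (hs : s * s = β) : Tess R α β →+* Tess R α β where
  toFun x := ⟨x.re + s * x.imJ, x.imI + s * x.imK, 0, 0⟩
  map_one' := by ext <;> simp
  map_zero' := by ext <;> simp
  map_add' x y := by ext <;> simp <;> ring
  map_mul' x y := by
    ext
    · simp only [mul_re, mul_imJ]
      linear_combination (-(x.imJ * y.imJ + α * x.imK * y.imK)) * hs
    · simp only [mul_imI, mul_imK]
      linear_combination (-(x.imJ * y.imK + x.imK * y.imJ)) * hs
    · simp
    · simp

lemma neg_mul_neg_eq {s : R} (hs : s * s = β) : -s * -s = β := (neg_mul_neg s s).trans hs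

variable {s : R} (hs : s * s = β)

@[simp] lemma evalJ_re (x : Tess R α β) : (evalJ s hs x).re = x.re + s * x.imJ := rfl
@[simp] lemma evalJ_imI (x : Tess R α β) : (evalJ s hs x).imI = x.imI + s * x.imK := rfl
@[simp] lemma evalJ_imJ (x : Tess R α β) : (evalJ s hs x).imJ = 0 := rfl
@[simp] lemma evalJ_imK (x : Tess R α β) : (evalJ s hs x).imK = 0 := rfl

end CommRing

section Field

variable {R : Type*} [Field R] [NeZero (2 : R)] {α β s : R} (hs : s * s = β)

lemma eq_of_evalJ_eq_of_evalJ_neg_eq (hs0 : s ≠ 0) {z w : Tess R α β}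
    (h : evalJ s hs z = evalJ s hs w)
    (h' : evalJ (-s) (neg_mul_neg_eq hs) z = evalJ (-s) (neg_mul_neg_eq hs) w) : z = w := by
  have hre := congrArg re h
  have hre' := congrArg re h'
  have hI := congrArg imI h
  have hI' := congrArg imI h'
  simp only [evalJ_re, evalJ_imI] at hre hre' hI hI'
  have h2 : (2 : R) ≠ 0 := two_ne_zero
  ext
  · exact mul_left_cancel₀ h2 (by linear_combination hre + hre')
  · exact mul_left_cancel₀ h2 (by linear_combination hI + hI')
  · exact mul_left_cancel₀ (mul_ne_zero h2 hs0) (by linear_combination hre - hre')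
  · exact mul_left_cancel₀ (mul_ne_zero h2 hs0) (by linear_combination hI - hI')

lemma matrix_ext_evalJ {m n : Type*} (hs0 : s ≠ 0) {A B : Matrix m n (Tess R α β)}
    (h : A.map (evalJ s hs) = B.map (evalJ s hs))
    (h' : A.map (evalJ (-s) (neg_mul_neg_eq hs)) = B.map (evalJ (-s) (neg_mul_neg_eq hs))) :
    A = B :=
  Matrix.ext fun i j =>
    eq_of_evalJ_eq_of_evalJ_neg_eq hs hs0 (congrFun₂ h i j) (congrFun₂ h' i j)

lemma matrix_mul_eq_one_iff_evalJ {n : Type*} [Fintype n] [DecidableEq n] (hs0 : s ≠ 0)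
    {A B : Matrix n n (Tess R α β)} :
    A * B = 1 ↔
      A.map (evalJ s hs) * B.map (evalJ s hs) = 1 ∧
        A.map (evalJ (-s) (neg_mul_neg_eq hs)) * B.map (evalJ (-s) (neg_mul_neg_eq hs)) = 1 := by
  have map_one_eq : ∀ t (ht : t * t = β), (1 : Matrix n n (Tess R α β)).map (evalJ t ht) = 1 :=
    fun t ht => map_one (evalJ t ht).mapMatrix
  simp only [← Matrix.map_mul]
  refine ⟨fun h => by simp only [h, map_one_eq, and_self], fun ⟨h, h'⟩ => ?_⟩
  exact matrix_ext_evalJ hs hs0 (h.trans (map_one_eq _ _).symm) (h'.trans (map_one_eq _ _).symm)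

def ofComponents (s : R) (a b : Tess R α β) : Tess R α β :=
  ofBase (1 / 2 : R) * (a + b) + (ofBase (1 / s) * (a - ofBase (1 / 2 : R) * (a + b))) * unitJ

lemma evalJ_ofComponents {a b : Tess R α β} (ha : a.imJ = 0 ∧ a.imK = 0)
    (hb : b.imJ = 0 ∧ b.imK = 0) (hs0 : s ≠ 0) :
    evalJ s hs (ofComponents s a b) = a ∧
      evalJ (-s) (neg_mul_neg_eq hs) (ofComponents s a b) = b := by
  constructor <;> ext <;>
    simp only [ofComponents, evalJ_re, evalJ_imI, evalJ_imJ, evalJ_imK, sub_eq_add_neg,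
      add_re, add_imI, add_imJ, add_imK, neg_re, neg_imI, neg_imJ, neg_imK,
      mul_re, mul_imI, mul_imJ, mul_imK, ofBase, unitJ, ha, hb, ← hs] <;>
    field_simp <;> ring

variable {n : Type*} (hs0 : s ≠ 0) {Ys Yd : Matrix n n (Tess R α β)}
  (hYs : ∀ i j, (Ys i j).imJ = 0 ∧ (Ys i j).imK = 0)
  (hYd : ∀ i j, (Yd i j).imJ = 0 ∧ (Yd i j).imK = 0)
include hs0 hYs hYd

lemma map_evalJ_ofComponents :
    (Matrix.of fun i j => ofComponents s (Ys i j) (Yd i j)).map (evalJ s hs) = Ys ∧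
      (Matrix.of fun i j => ofComponents s (Ys i j) (Yd i j)).map
        (evalJ (-s) (neg_mul_neg_eq hs)) = Yd :=
  ⟨Matrix.ext fun i j => (evalJ_ofComponents hs (hYs i j) (hYd i j) hs0).1,
    Matrix.ext fun i j => (evalJ_ofComponents hs (hYs i j) (hYd i j) hs0).2⟩

variable [Fintype n] [DecidableEq n] {X : Matrix n n (Tess R α β)}

lemma mul_ofComponents_eq_one (hXs : X.map (evalJ s hs) * Ys = 1)
    (hXd : X.map (evalJ (-s) (neg_mul_neg_eq hs)) * Yd = 1) :
    X * Matrix.of (fun i j => ofComponents s (Ys i j) (Yd i j)) = 1 := by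
  obtain ⟨hs', hd'⟩ := map_evalJ_ofComponents hs hs0 hYs hYd
  rw [matrix_mul_eq_one_iff_evalJ hs hs0, hs', hd']
  exact ⟨hXs, hXd⟩

lemma ofComponents_mul_eq_one (hXs : Ys * X.map (evalJ s hs) = 1)
    (hXd : Yd * X.map (evalJ (-s) (neg_mul_neg_eq hs)) = 1) :
    Matrix.of (fun i j => ofComponents s (Ys i j) (Yd i j)) * X = 1 := by
  obtain ⟨hs', hd'⟩ := map_evalJ_ofComponents hs hs0 hYs hYd
  rw [matrix_mul_eq_one_iff_evalJ hs hs0, hs', hd']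
  exact ⟨hXs, hXd⟩

end Field

variable {α β : ℝ} {p q : ℕ}

lemma matS_eq_map (hβ : 0 ≤ β) (X : Matrix (Fin p) (Fin q) (Tess ℝ α β)) :
    matS X = X.map (evalJ √β (Real.mul_self_sqrt hβ)) :=
  rfl

lemma matD_eq_map (hβ : 0 ≤ β) (X : Matrix (Fin p) (Fin q) (Tess ℝ α β)) :
    matD X = X.map (evalJ (-√β) (neg_mul_neg_eq (Real.mul_self_sqrt hβ))) := by
  ext <;> simp [matD, sub_eq_add_neg]

lemma matInCα_map_evalJ {s : ℝ} (hs : s * s = β) (X : Matrix (Fin p) (Fin q) (Tess ℝ α β)) :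
    matInCα (X.map (evalJ s hs)) :=
  fun _ _ => ⟨rfl, rfl⟩

end Tess

theorem tess_matrix_inverse_general (α β : ℝ) (hβ : 0 < β) (p : ℕ)
    (X : Matrix (Fin p) (Fin p) (Tess ℝ α β)) :
    ((∃ Y, X * Y = 1 ∧ Y * X = 1) ↔
      ((∃ Ys, Tess.matInCα Ys ∧ Tess.matS X * Ys = 1 ∧ Ys * Tess.matS X = 1) ∧
       (∃ Yd, Tess.matInCα Yd ∧ Tess.matD X * Yd = 1 ∧ Yd * Tess.matD X = 1))) ∧
    (∀ Ys Yd : Matrix (Fin p) (Fin p) (Tess ℝ α β),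
      Tess.matInCα Ys → Tess.matS X * Ys = 1 → Ys * Tess.matS X = 1 →
      Tess.matInCα Yd → Tess.matD X * Yd = 1 → Yd * Tess.matD X = 1 →
      (X * (Matrix.of fun i j =>
          Tess.ofBase (1 / 2 : ℝ) * (Ys i j + Yd i j)
            + (Tess.ofBase (1 / Real.sqrt β)
                * (Ys i j - Tess.ofBase (1 / 2 : ℝ) * (Ys i j + Yd i j)))
              * Tess.unitJ) = 1 ∧
       (Matrix.of fun i j =>
          Tess.ofBase (1 / 2 : ℝ) * (Ys i j + Yd i j)
            + (Tess.ofBase (1 / Real.sqrt β)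
                * (Ys i j - Tess.ofBase (1 / 2 : ℝ) * (Ys i j + Yd i j)))
              * Tess.unitJ) * X = 1)) := by
  have hs := Real.mul_self_sqrt hβ.le
  have hs0 : √β ≠ 0 := (Real.sqrt_pos.2 hβ).ne'
  rw [Tess.matS_eq_map hβ.le, Tess.matD_eq_map hβ.le]
  have inverse_formula := fun Ys Yd hYs hXs hsX hYd hXd hdX =>
    And.intro (Tess.mul_ofComponents_eq_one (X := X) (Ys := Ys) (Yd := Yd) hs hs0 hYs hYd hXs hXd)
      (Tess.ofComponents_mul_eq_one (X := X) hs hs0 hYs hYd hsX hdX)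
  refine ⟨⟨fun ⟨Y, hXY, hYX⟩ => ?_, fun ⟨⟨Ys, hYs, hXs, hsX⟩, ⟨Yd, hYd, hXd, hdX⟩⟩ =>
    ⟨_, inverse_formula Ys Yd hYs hXs hsX hYd hXd hdX⟩⟩, inverse_formula⟩
  rw [Tess.matrix_mul_eq_one_iff_evalJ hs hs0] at hXY hYX
  exact ⟨⟨_, Tess.matInCα_map_evalJ _ Y, hXY.1, hYX.1⟩,
    ⟨_, Tess.matInCα_map_evalJ _ Y, hXY.2, hYX.2⟩⟩

/-- `X ∈ 𝕋_{αβ}^{p×p}` is invertible iff both `X_s` and `X_d` are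
invertible over the subalgebra `ℂ_α`; and in that case `X⁻¹ = C + D j` with
`C = (X_s⁻¹ + X_d⁻¹)/2` and `D = (X_s⁻¹ − C)/√β`. -/
theorem tess_matrix_inverse (α β : ℝ) (hα : α ≠ 0) (hβ : 0 < β) (p : ℕ)
    (X : Matrix (Fin p) (Fin p) (Tess ℝ α β)) :
    ((∃ Y, X * Y = 1 ∧ Y * X = 1) ↔
      ((∃ Ys, Tess.matInCα Ys ∧ Tess.matS X * Ys = 1 ∧ Ys * Tess.matS X = 1) ∧
       (∃ Yd, Tess.matInCα Yd ∧ Tess.matD X * Yd = 1 ∧ Yd * Tess.matD X = 1))) ∧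
    (∀ Ys Yd : Matrix (Fin p) (Fin p) (Tess ℝ α β),
      Tess.matInCα Ys → Tess.matS X * Ys = 1 → Ys * Tess.matS X = 1 →
      Tess.matInCα Yd → Tess.matD X * Yd = 1 → Yd * Tess.matD X = 1 →
      (X * (Matrix.of fun i j =>
          Tess.ofBase (1 / 2 : ℝ) * (Ys i j + Yd i j)
            + (Tess.ofBase (1 / Real.sqrt β)
                * (Ys i j - Tess.ofBase (1 / 2 : ℝ) * (Ys i j + Yd i j)))
              * Tess.unitJ) = 1 ∧
       (Matrix.of fun i j =>
          Tess.ofBase (1 / 2 : ℝ) * (Ys i j + Yd i j)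
            + (Tess.ofBase (1 / Real.sqrt β)
                * (Ys i j - Tess.ofBase (1 / 2 : ℝ) * (Ys i j + Yd i j)))
              * Tess.unitJ) * X = 1)) :=
  tess_matrix_inverse_general α β hβ p X
end

section
/- Let X ∈ 𝕋_{αβ}^{p×p} be written X = X_s w₁ + X_d w₂ as in the idempotent decomposition. Then X admits a square root in the generalized (αβ)-tessarine matrices if and only if both X_s and X_d admit square roots over ℂ_α (respectively its complexification), and if M_s² = X_s, M_d² = X_d then M = M_s w₁ + M_d w₂ satisfies M² = X. -/
/-- Embedding of real `(αβ)`-tessarines into the generalized (complexified)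
`(αβ)`-tessarines `𝔾_{αβ} = 𝕋_{αβ} ⊗ ℂ`. -/
def Tess.toG {α β : ℝ} (x : Tess ℝ α β) : Tess ℂ (α : ℂ) (β : ℂ) :=
  ⟨(x.re : ℂ), (x.imI : ℂ), (x.imJ : ℂ), (x.imK : ℂ)⟩

/-- The unit `w₁` in the generalized `(αβ)`-tessarines. -/
noncomputable def Tess.w1G (α β : ℝ) : Tess ℂ (α : ℂ) (β : ℂ) :=
  ⟨(1 / 2 : ℂ), 0, ((1 / (2 * Real.sqrt β) : ℝ) : ℂ), 0⟩

/-- The unit `w₂` in the generalized `(αβ)`-tessarines. -/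
noncomputable def Tess.w2G (α β : ℝ) : Tess ℂ (α : ℂ) (β : ℂ) :=
  ⟨(1 / 2 : ℂ), 0, -((1 / (2 * Real.sqrt β) : ℝ) : ℂ), 0⟩

/-- A matrix over the generalized tessarines has entries in the complexification of
the subalgebra `ℂ_α` (spanned by `1, i`). -/
def Tess.matInCαG {α β : ℝ} {p : ℕ} (Y : Matrix (Fin p) (Fin p) (Tess ℂ (α : ℂ) (β : ℂ))) :
    Prop :=
  ∀ i j, (Y i j).imJ = 0 ∧ (Y i j).imK = 0

/-!
For `c` with `c² = β`, sending `x = x_a + x_b j` (with `x_a, x_b ∈ ℂ_α`) to `x_a + c x_b` is a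
ring endomorphism of the generalized tessarines with image in `ℂ_α ⊗ ℂ`; for `c = ±√β` it maps
`X` to `X_s` resp. `X_d`, hence carries a square root of `X` to square roots of `X_s` and `X_d`.
Conversely `w₁, w₂` are orthogonal idempotents, so `(M_s w₁ + M_d w₂)² = M_s² w₁ + M_d² w₂`,
which is `X_s w₁ + X_d w₂ = X`.
-/

theorem Matrix.smul_add_smul_mul_self {S n : Type*} [CommRing S] [Fintype n] {e f : S}
    (he : IsIdempotentElem e) (hf : IsIdempotentElem f) (hef : e * f = 0) (A B : Matrix n n S) :
    (e • A + f • B) * (e • A + f • B) = e • (A * A) + f • (B * B) := by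
  simp only [add_mul, mul_add, Matrix.smul_mul, Matrix.mul_smul, smul_smul, he.eq, hf.eq, hef,
    mul_comm f e, zero_smul, add_zero, zero_add]

namespace Tess

section Component

variable {R : Type*} [CommRing R] {α β : R}

def component (c : R) (hc : c * c = β) : Tess R α β →+* Tess R α β where
  toFun x := ⟨x.re + c * x.imJ, x.imI + c * x.imK, 0, 0⟩
  map_one' := by ext <;> simp
  map_mul' x y := by
    ext
    · simp only [mul_re, mul_imJ]
      linear_combination (-(x.imJ * y.imJ) - α * (x.imK * y.imK)) * hc
    · simp only [mul_imI, mul_imK]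
      linear_combination (-(x.imJ * y.imK) - x.imK * y.imJ) * hc
    · simp
    · simp
  map_zero' := by ext <;> simp
  map_add' x y := by ext <;> simp <;> ring

@[simp] lemma component_apply (c : R) (hc : c * c = β) (x : Tess R α β) :
    component c hc x = ⟨x.re + c * x.imJ, x.imI + c * x.imK, 0, 0⟩ := rfl

end Component

variable {α β : ℝ}

lemma matInCαG_map_component {p : ℕ} {c : ℂ} (hc : c * c = β)
    (M : Matrix (Fin p) (Fin p) (Tess ℂ (α : ℂ) (β : ℂ))) :
    matInCαG (M.map (component c hc)) :=
  fun _ _ => ⟨rfl, rfl⟩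

lemma ofReal_sqrt_mul_self (hβ : 0 ≤ β) : (√β : ℂ) * (√β : ℂ) = β := by
  rw [← Complex.ofReal_mul, Real.mul_self_sqrt hβ]

lemma map_toG_matS {p q : ℕ} (hβ : 0 ≤ β) (X : Matrix (Fin p) (Fin q) (Tess ℝ α β)) :
    (matS X).map toG = (X.map toG).map (component _ (ofReal_sqrt_mul_self hβ)) := by
  ext i j <;> simp [matS, toG]

lemma map_toG_matD {p q : ℕ} (hβ : 0 ≤ β) (X : Matrix (Fin p) (Fin q) (Tess ℝ α β)) :
    (matD X).map toG =
      (X.map toG).map (component _ ((neg_mul_neg _ _).trans (ofReal_sqrt_mul_self hβ))) := by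
  ext i j <;> simp [matD, toG, sub_eq_add_neg]

lemma ofReal_mul_inv_two_sqrt_sq (hβ : 0 < β) :
    (β : ℂ) * ((1 / (2 * √β) : ℝ) : ℂ) * ((1 / (2 * √β) : ℝ) : ℂ) = 1 / 4 := by
  have hs : √β ≠ 0 := (Real.sqrt_pos.2 hβ).ne'
  have : β * (1 / (2 * √β)) * (1 / (2 * √β)) = 1 / 4 := by
    field_simp
    rw [Real.sq_sqrt hβ.le]
    ring
  rw [← Complex.ofReal_mul, ← Complex.ofReal_mul, this]
  norm_num

lemma isIdempotentElem_w1G (hβ : 0 < β) : IsIdempotentElem (w1G α β) := by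
  have h := ofReal_mul_inv_two_sqrt_sq hβ
  ext
  · simp only [w1G, mul_re]
    linear_combination h
  all_goals simp only [w1G, mul_imI, mul_imJ, mul_imK]; ring

lemma isIdempotentElem_w2G (hβ : 0 < β) : IsIdempotentElem (w2G α β) := by
  have h := ofReal_mul_inv_two_sqrt_sq hβ
  ext
  · simp only [w2G, mul_re]
    linear_combination h
  all_goals simp only [w2G, mul_imI, mul_imJ, mul_imK]; ring

lemma w1G_mul_w2G (hβ : 0 < β) : w1G α β * w2G α β = 0 := by
  have h := ofReal_mul_inv_two_sqrt_sq hβ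
  ext
  · simp only [w1G, w2G, mul_re, zero_re]
    linear_combination -h
  all_goals simp only [w1G, w2G, mul_imI, mul_imJ, mul_imK, zero_imI, zero_imJ, zero_imK]; ring

lemma map_toG_eq_w1G_smul_add_w2G_smul {p q : ℕ} (hβ : 0 < β)
    (X : Matrix (Fin p) (Fin q) (Tess ℝ α β)) :
    X.map toG = w1G α β • (matS X).map toG + w2G α β • (matD X).map toG := by
  have hs : (√β : ℂ) ≠ 0 := Complex.ofReal_ne_zero.2 (Real.sqrt_pos.2 hβ).ne'
  ext i j <;> simp [toG, matS, matD, w1G, w2G] <;> field_simp <;> ring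

lemma mul_self_of_mul_w1G_add_mul_w2G {p : ℕ} (hβ : 0 < β)
    {X : Matrix (Fin p) (Fin p) (Tess ℝ α β)} {Ms Md : Matrix (Fin p) (Fin p) (Tess ℂ α β)}
    (hMs : Ms * Ms = (matS X).map toG) (hMd : Md * Md = (matD X).map toG) :
    (Matrix.of fun i j => Ms i j * w1G α β + Md i j * w2G α β) *
      (Matrix.of fun i j => Ms i j * w1G α β + Md i j * w2G α β) = X.map toG := by
  have hM : (Matrix.of fun i j => Ms i j * w1G α β + Md i j * w2G α β) =
      w1G α β • Ms + w2G α β • Md := by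
    ext i j : 1
    simp [mul_comm]
  rw [hM, Matrix.smul_add_smul_mul_self (isIdempotentElem_w1G hβ) (isIdempotentElem_w2G hβ)
    (w1G_mul_w2G hβ), hMs, hMd, ← map_toG_eq_w1G_smul_add_w2G_smul hβ]

end Tess

theorem tess_matrix_sqrt_general (α β : ℝ) (hβ : 0 < β) (p : ℕ)
    (X : Matrix (Fin p) (Fin p) (Tess ℝ α β)) :
    ((∃ M : Matrix (Fin p) (Fin p) (Tess ℂ (α : ℂ) (β : ℂ)),
        M * M = X.map Tess.toG) ↔
      ((∃ Ms : Matrix (Fin p) (Fin p) (Tess ℂ (α : ℂ) (β : ℂ)),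
          Tess.matInCαG Ms ∧ Ms * Ms = (Tess.matS X).map Tess.toG) ∧
       (∃ Md : Matrix (Fin p) (Fin p) (Tess ℂ (α : ℂ) (β : ℂ)),
          Tess.matInCαG Md ∧ Md * Md = (Tess.matD X).map Tess.toG))) ∧
    (∀ Ms Md : Matrix (Fin p) (Fin p) (Tess ℂ (α : ℂ) (β : ℂ)),
      Ms * Ms = (Tess.matS X).map Tess.toG →
      Md * Md = (Tess.matD X).map Tess.toG →
      (Matrix.of fun i j => Ms i j * Tess.w1G α β + Md i j * Tess.w2G α β) *
        (Matrix.of fun i j => Ms i j * Tess.w1G α β + Md i j * Tess.w2G α β)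
        = X.map Tess.toG) := by
  have hs := Tess.ofReal_sqrt_mul_self hβ.le
  have hd := (neg_mul_neg _ _).trans hs
  refine ⟨⟨?_, ?_⟩, fun _ _ => Tess.mul_self_of_mul_w1G_add_mul_w2G hβ⟩
  · rintro ⟨M, hM⟩
    refine ⟨⟨M.map (Tess.component _ hs), Tess.matInCαG_map_component hs M, ?_⟩,
      ⟨M.map (Tess.component _ hd), Tess.matInCαG_map_component hd M, ?_⟩⟩
    · rw [← Matrix.map_mul, hM, Tess.map_toG_matS hβ.le]
    · rw [← Matrix.map_mul, hM, Tess.map_toG_matD hβ.le]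
  · rintro ⟨⟨Ms, -, hMs⟩, ⟨Md, -, hMd⟩⟩
    exact ⟨_, Tess.mul_self_of_mul_w1G_add_mul_w2G hβ hMs hMd⟩

/-- `X = X_s w₁ + X_d w₂` admits a square root among generalized
`(αβ)`-tessarine matrices iff both `X_s` and `X_d` admit square roots over the
complexification of `ℂ_α`; and if `M_s² = X_s`, `M_d² = X_d`, then
`M = M_s w₁ + M_d w₂` satisfies `M² = X`. -/
theorem tess_matrix_sqrt (α β : ℝ) (hα : α ≠ 0) (hβ : 0 < β) (p : ℕ)
    (X : Matrix (Fin p) (Fin p) (Tess ℝ α β)) :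
    ((∃ M : Matrix (Fin p) (Fin p) (Tess ℂ (α : ℂ) (β : ℂ)),
        M * M = X.map Tess.toG) ↔
      ((∃ Ms : Matrix (Fin p) (Fin p) (Tess ℂ (α : ℂ) (β : ℂ)),
          Tess.matInCαG Ms ∧ Ms * Ms = (Tess.matS X).map Tess.toG) ∧
       (∃ Md : Matrix (Fin p) (Fin p) (Tess ℂ (α : ℂ) (β : ℂ)),
          Tess.matInCαG Md ∧ Md * Md = (Tess.matD X).map Tess.toG))) ∧
    (∀ Ms Md : Matrix (Fin p) (Fin p) (Tess ℂ (α : ℂ) (β : ℂ)),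
      Ms * Ms = (Tess.matS X).map Tess.toG →
      Md * Md = (Tess.matD X).map Tess.toG →
      (Matrix.of fun i j => Ms i j * Tess.w1G α β + Md i j * Tess.w2G α β) *
        (Matrix.of fun i j => Ms i j * Tess.w1G α β + Md i j * Tess.w2G α β)
        = X.map Tess.toG) :=
  tess_matrix_sqrt_general α β hβ p X
end

section
/- Let λ be an eigenvalue of X_s with eigenvector u_s and μ an eigenvalue of X_d with eigenvector u_d, where X = X_s w₁ + X_d w₂ ∈ 𝕋_{αβ}^{p×p} is the idempotent decomposition. Then λ w₁ + μ w₂ is an eigenvalue of X with eigenvector u_s w₁ + u_d w₂, i.e. X(u_s w₁ + u_d w₂) = (λ w₁ + μ w₂)(u_s w₁ + u_d w₂). -/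
/-! Since `w₁, w₂` are orthogonal idempotents and `X = w₁ X_s + w₂ X_d`, multiplication by `X`
acts on the `w₁`- and `w₂`-components of a vector separately, through `X_s` and `X_d`. -/

namespace Matrix

theorem smul_add_smul_mulVec_smul_add_smul {R : Type*} [CommSemiring R] {e₁ e₂ : R}
    {m n : Type*} [Fintype n]
    (h₁ : IsIdempotentElem e₁) (h₂ : IsIdempotentElem e₂) (h₁₂ : e₁ * e₂ = 0)
    (A B : Matrix m n R) (u v : n → R) :
    (e₁ • A + e₂ • B) *ᵥ (e₁ • u + e₂ • v) = e₁ • (A *ᵥ u) + e₂ • (B *ᵥ v) := by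
  have h₂₁ : e₂ * e₁ = 0 := by rw [mul_comm, h₁₂]
  simp only [add_mulVec, mulVec_add, smul_mulVec, mulVec_smul, smul_add, smul_smul, h₁.eq, h₂.eq,
    h₁₂, h₂₁, zero_smul, add_zero, zero_add]

theorem smul_add_smul_mulVec_eigenvector {R : Type*} [CommRing R] {e₁ e₂ : R}
    {n : Type*} [Fintype n]
    (h₁ : IsIdempotentElem e₁) (h₂ : IsIdempotentElem e₂) (h₁₂ : e₁ * e₂ = 0)
    {A B : Matrix n n R} {u v : n → R} {a b : R} (hA : A *ᵥ u = a • u) (hB : B *ᵥ v = b • v) :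
    (e₁ • A + e₂ • B) *ᵥ (e₁ • u + e₂ • v) = (a * e₁ + b * e₂) • (e₁ • u + e₂ • v) := by
  have h₂₁ : e₂ * e₁ = 0 := by rw [mul_comm, h₁₂]
  rw [smul_add_smul_mulVec_smul_add_smul h₁ h₂ h₁₂, hA, hB]
  linear_combination (norm := module)
    -(a * h₁.eq) • u - (a * h₁₂) • v - (b * h₂₁) • u - (b * h₂.eq) • v

end Matrix

namespace Tess

variable {α β : ℝ}

theorem isIdempotentElem_w1 (hβ : 0 < β) : IsIdempotentElem (w1 α β) := by
  have hs : √β ≠ 0 := (Real.sqrt_pos.mpr hβ).ne'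
  ext <;> simp only [w1, mul_re, mul_imI, mul_imJ, mul_imK] <;> field_simp <;>
    linarith [Real.sq_sqrt hβ.le]

theorem isIdempotentElem_w2 (hβ : 0 < β) : IsIdempotentElem (w2 α β) := by
  have hs : √β ≠ 0 := (Real.sqrt_pos.mpr hβ).ne'
  ext <;> simp only [w2, mul_re, mul_imI, mul_imJ, mul_imK] <;> field_simp <;>
    linarith [Real.sq_sqrt hβ.le]

theorem w1_mul_w2 (hβ : 0 < β) : w1 α β * w2 α β = 0 := by
  have hs : √β ≠ 0 := (Real.sqrt_pos.mpr hβ).ne'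
  ext <;> simp only [w1, w2, mul_re, mul_imI, mul_imJ, mul_imK, zero_re, zero_imI, zero_imJ,
    zero_imK] <;> field_simp <;> linarith [Real.sq_sqrt hβ.le]

theorem w1_smul_matS_add_w2_smul_matD (hβ : 0 < β) {p q : ℕ}
    (X : Matrix (Fin p) (Fin q) (Tess ℝ α β)) :
    w1 α β • matS X + w2 α β • matD X = X := by
  have hs : √β ≠ 0 := (Real.sqrt_pos.mpr hβ).ne'
  ext i j <;> simp only [w1, w2, matS, matD, Matrix.add_apply, Matrix.smul_apply, Matrix.of_apply,
    smul_eq_mul, add_re, add_imI, add_imJ, add_imK, mul_re, mul_imI, mul_imJ, mul_imK] <;>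
    field_simp <;> ring

end Tess

theorem tess_eigen_combine_general (α β : ℝ) (hβ : 0 < β) (p : ℕ)
    (X : Matrix (Fin p) (Fin p) (Tess ℝ α β)) (lam mu : Tess ℝ α β)
    (us ud : Fin p → Tess ℝ α β)
    (hs : (Tess.matS X).mulVec us = fun n => lam * us n)
    (hd : (Tess.matD X).mulVec ud = fun n => mu * ud n) :
    X.mulVec (fun n => us n * Tess.w1 α β + ud n * Tess.w2 α β)
      = fun n => (lam * Tess.w1 α β + mu * Tess.w2 α β)
          * (us n * Tess.w1 α β + ud n * Tess.w2 α β) := by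
  have hvec : (fun n => us n * Tess.w1 α β + ud n * Tess.w2 α β)
      = Tess.w1 α β • us + Tess.w2 α β • ud := by
    funext n
    simp only [Pi.add_apply, Pi.smul_apply, smul_eq_mul, mul_comm]
  rw [hvec, ← Tess.w1_smul_matS_add_w2_smul_matD hβ X,
    Matrix.smul_add_smul_mulVec_eigenvector (Tess.isIdempotentElem_w1 hβ)
      (Tess.isIdempotentElem_w2 hβ) (Tess.w1_mul_w2 hβ) hs hd, ← hvec]
  rfl

/-- if `λ` is an eigenvalue of `X_s` with eigenvector `u_s` and `μ` an
eigenvalue of `X_d` with eigenvector `u_d` (all over the subalgebra `ℂ_α`), then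
`λ w₁ + μ w₂` is an eigenvalue of `X` with eigenvector `u_s w₁ + u_d w₂`. -/
theorem tess_eigen_combine (α β : ℝ) (hα : α ≠ 0) (hβ : 0 < β) (p : ℕ)
    (X : Matrix (Fin p) (Fin p) (Tess ℝ α β)) (lam mu : Tess ℝ α β)
    (us ud : Fin p → Tess ℝ α β)
    (hlam : lam.imJ = 0 ∧ lam.imK = 0) (hmu : mu.imJ = 0 ∧ mu.imK = 0)
    (hus : ∀ n, (us n).imJ = 0 ∧ (us n).imK = 0)
    (hud : ∀ n, (ud n).imJ = 0 ∧ (ud n).imK = 0)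
    (hs : (Tess.matS X).mulVec us = fun n => lam * us n)
    (hd : (Tess.matD X).mulVec ud = fun n => mu * ud n) :
    X.mulVec (fun n => us n * Tess.w1 α β + ud n * Tess.w2 α β)
      = fun n => (lam * Tess.w1 α β + mu * Tess.w2 α β)
          * (us n * Tess.w1 α β + ud n * Tess.w2 α β) :=
  tess_eigen_combine_general α β hβ p X lam mu us ud hs hd
end
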